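/- arXiv:1303.6148 — 5 statements merged into one kernel-verified Lean document; each statement's English description precedes it below -/
import Mathlib

section
/- Let σ > 0 and let u : ℝ → (ℕ → ℂ) be a Fourier-side solution of the cubic Szegő equation such that M := sup_{t∈ℝ} ‖u(t)‖_W < ∞ and ‖u(0)‖_{G_σ(W)} < ∞. Then there exist constants λ > 0 and C₀ > 0 (depending only on σ, M and ‖u(0)‖_{G_σ(W)}) such that for all t ∈ ℝ, ‖u(t)‖_{G_{τ(t)}(W)} ≤ C₀, where τ(t) = σ·e^{−λ|t|}. In particular, for analytic initial data the solution remains spatially analytic for all time, with radius of analyticity at least σ·e^{−λ|t|}. -/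
/-!
Write `Φ_b(a) = ∑ₖ (e^{bk} - 1) |a k|`, so that the `G_b(W)` norm is `‖a‖_W + Φ_b(a)`, and let `M`
bound the Wiener norm. Since `1 + (e^{bk} - 1)` is multiplicative in `k` and `k ≤ n + m` on the
resonant set `n + m = j + k`, the nonlinearity has `Φ_b`-norm at most `2 Φ_b M² + Φ_b² M`. Hence,
with the radius `b` frozen, `Φ_b(u t)` can at most double from `C` to `2 C` within time
`(15 C M²)⁻¹`; this bootstrap is run with truncated weights, for which `Φ` is a priori finite.
Convexity of `exp` gives `Φ_{θ b} ≤ θ Φ_b` for `θ ≤ 1`, so shrinking the radius by `e⁻¹` brings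
`2 C` back below `C` and the argument restarts. After `n` restarts the radius is `σ e⁻ⁿ`, which
gives `λ = 15 C M²`. Every estimate comes from the mean value inequality, so it runs backwards in time
as well.
-/

open scoped BigOperators

/-- The cubic nonlinearity of the Szegő equation on the Fourier side:
for frequency `k`, the sum of `u(t,n) * conj (u(t,j)) * u(t,m)` over all triples
`(n,j,m) ∈ ℕ³` with `n + m = j + k`. -/
noncomputable def szegoCubic (u : ℝ → ℕ → ℂ) (t : ℝ) (k : ℕ) : ℂ :=
  ∑' p : {p : ℕ × ℕ × ℕ // p.1 + p.2.2 = p.2.1 + k},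
    u t p.1.1 * (starRingEnd ℂ) (u t p.1.2.1) * u t p.1.2.2

/-- `u : ℝ → (ℕ → ℂ)` is a Fourier-side solution of the cubic Szegő equation
`i ∂ₜ u = Π(|u|² u)`: for each `k`, the map `t ↦ u(t,k)` is differentiable with
`i u'(t,k) = ∑_{n+m=j+k} u(t,n) conj(u(t,j)) u(t,m)`, the sum converging absolutely. -/
def IsSzegoSolution (u : ℝ → ℕ → ℂ) : Prop :=
  ∀ t : ℝ, ∀ k : ℕ,
    (Summable fun p : {p : ℕ × ℕ × ℕ // p.1 + p.2.2 = p.2.1 + k} =>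
      ‖u t p.1.1 * (starRingEnd ℂ) (u t p.1.2.1) * u t p.1.2.2‖) ∧
    HasDerivAt (fun s : ℝ => u s k) (-Complex.I * szegoCubic u t k) t

open scoped ENNReal NNReal
open Set

namespace Szego

noncomputable def wienerNorm (a : ℕ → ℂ) : ℝ≥0∞ := ∑' k, ‖a k‖ₑ

noncomputable def weightedNorm (W : ℕ → ℝ≥0) (a : ℕ → ℂ) : ℝ≥0∞ := ∑' k, W k * ‖a k‖ₑ

noncomputable def cubicMajorant (a : ℕ → ℂ) (k : ℕ) : ℝ≥0∞ :=
  ∑' p : {p : ℕ × ℕ × ℕ // p.1 + p.2.2 = p.2.1 + k}, ‖a p.1.1‖ₑ * ‖a p.1.2.1‖ₑ * ‖a p.1.2.2‖ₑ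

def IsGevreyWeight (W : ℕ → ℝ≥0) : Prop :=
  Monotone W ∧ ∀ n m, W (n + m) ≤ W n + W m + W n * W m

theorem tsum_triple_mul (f g h : ℕ → ℝ≥0∞) :
    ∑' q : ℕ × ℕ × ℕ, f q.1 * g q.2.1 * h q.2.2 = (∑' n, f n) * (∑' j, g j) * ∑' m, h m := by
  simp_rw [ENNReal.tsum_prod', mul_assoc, ENNReal.tsum_mul_left, ENNReal.tsum_mul_right]

theorem enorm_szegoCubic_le (u : ℝ → ℕ → ℂ) (t : ℝ) (k : ℕ) :
    ‖szegoCubic u t k‖ₑ ≤ cubicMajorant (u t) k :=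
  enorm_tsum_le_tsum_enorm.trans_eq <| by simp only [enorm_mul, RCLike.enorm_conj]; rfl

theorem tsum_mul_cubicMajorant_le {W : ℕ → ℝ≥0} (hW : IsGevreyWeight W) (a : ℕ → ℂ) :
    ∑' k, W k * cubicMajorant a k ≤
      2 * weightedNorm W a * wienerNorm a ^ 2 + weightedNorm W a ^ 2 * wienerNorm a := by
  set e : ℕ → ℝ≥0∞ := (‖a ·‖ₑ)
  set S := fun k : ℕ => {p : ℕ × ℕ × ℕ // p.1 + p.2.2 = p.2.1 + k}
  have hinj : Function.Injective fun x : (k : ℕ) × S k => (x.2 : ℕ × ℕ × ℕ) := by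
    rintro ⟨k, p, hp⟩ ⟨k', p', hp'⟩ h
    obtain rfl : p = p' := h
    obtain rfl : k = k' := by omega
    rfl
  have hweight : ∀ x : (k : ℕ) × S k, (W x.1 : ℝ≥0∞) ≤ W x.2.1.1 + W x.2.1.2.2 +
      W x.2.1.1 * W x.2.1.2.2 := by
    rintro ⟨k, ⟨n, j, m⟩, hp⟩
    simp only at hp
    exact_mod_cast (hW.1 (by omega : k ≤ n + m)).trans (hW.2 n m)
  set g : ℕ × ℕ × ℕ → ℝ≥0∞ := fun q =>
    (W q.1 + W q.2.2 + W q.1 * W q.2.2 : ℝ≥0∞) * (e q.1 * e q.2.1 * e q.2.2)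
  calc ∑' k, W k * cubicMajorant a k
      = ∑' x : (k : ℕ) × S k, W x.1 * (e x.2.1.1 * e x.2.1.2.1 * e x.2.1.2.2) := by
        rw [ENNReal.tsum_sigma (fun k (p : S k) => W k * (e p.1.1 * e p.1.2.1 * e p.1.2.2))]
        simp_rw [cubicMajorant, ENNReal.tsum_mul_left]; rfl
    _ ≤ ∑' x : (k : ℕ) × S k, g x.2 := ENNReal.tsum_le_tsum fun x => mul_le_mul_left (hweight x) _
    _ ≤ ∑' q, g q := ENNReal.tsum_comp_le_tsum_of_injective hinj g
    _ = ∑' q : ℕ × ℕ × ℕ, ((W q.1 * e q.1) * e q.2.1 * e q.2.2 +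
          e q.1 * e q.2.1 * (W q.2.2 * e q.2.2) +
          (W q.1 * e q.1) * e q.2.1 * (W q.2.2 * e q.2.2)) :=
        tsum_congr fun q => by simp only [g]; ring
    _ = _ := by
        rw [ENNReal.tsum_add, ENNReal.tsum_add, tsum_triple_mul (fun n => W n * e n) e e,
          tsum_triple_mul e e (fun m => W m * e m),
          tsum_triple_mul (fun n => W n * e n) e (fun m => W m * e m)]
        simp only [weightedNorm, wienerNorm, e]; ring

theorem weightedNorm_mono {W W' : ℕ → ℝ≥0} (h : ∀ k, W k ≤ W' k) (a : ℕ → ℂ) :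
    weightedNorm W a ≤ weightedNorm W' a :=
  ENNReal.tsum_le_tsum fun k => by gcongr; exact h k

theorem weightedNorm_le_mul_wienerNorm {W : ℕ → ℝ≥0} {R : ℝ≥0} (h : ∀ k, W k ≤ R)
    (a : ℕ → ℂ) : weightedNorm W a ≤ R * wienerNorm a := by
  rw [wienerNorm, ← ENNReal.tsum_mul_left]
  exact ENNReal.tsum_le_tsum fun k => by gcongr; exact h k

theorem weightedNorm_le_of_forall_min_le {W : ℕ → ℝ≥0} {a : ℕ → ℂ} {B : ℝ≥0∞}
    (h : ∀ R : ℝ≥0, weightedNorm (fun k => min (W k) R) a ≤ B) : weightedNorm W a ≤ B := by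
  rw [weightedNorm, ENNReal.tsum_eq_iSup_sum]
  refine iSup_le fun F => ?_
  calc ∑ k ∈ F, (W k : ℝ≥0∞) * ‖a k‖ₑ = ∑ k ∈ F, (min (W k) (∑ i ∈ F, W i) : ℝ≥0) * ‖a k‖ₑ :=
        Finset.sum_congr rfl fun k hk => by
          rw [min_eq_left (Finset.single_le_sum (fun _ _ => bot_le) hk)]
    _ ≤ weightedNorm (fun k => min (W k) (∑ i ∈ F, W i)) a := ENNReal.sum_le_tsum F
    _ ≤ B := h _

theorem IsGevreyWeight.min {W : ℕ → ℝ≥0} (hW : IsGevreyWeight W) (R : ℝ≥0) :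
    IsGevreyWeight fun k => min (W k) R := by
  refine ⟨fun n m h => min_le_min_right R (hW.1 h), fun n m => ?_⟩
  rcases le_total (W n) R with hn | hn <;> rcases le_total (W m) R with hm | hm
  · simp only [min_eq_left hn, min_eq_left hm]
    exact (min_le_left _ _).trans (hW.2 n m)
  all_goals
    simp only [min_eq_right hn, min_eq_right hm, min_eq_left hn, min_eq_left hm]
    exact (min_le_right _ _).trans (by first | exact le_add_self.trans le_self_add |
      exact le_self_add.trans le_self_add)

noncomputable def gevreyWeight (b : ℝ) (k : ℕ) : ℝ≥0 := (Real.exp (b * k) - 1).toNNReal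

theorem gevreyWeight_le_gevreyWeight {b b' : ℝ} (h : b ≤ b') (k : ℕ) :
    gevreyWeight b k ≤ gevreyWeight b' k := by
  unfold gevreyWeight
  gcongr

theorem isGevreyWeight_gevreyWeight {b : ℝ} (hb : 0 ≤ b) : IsGevreyWeight (gevreyWeight b) := by
  have hW : ∀ k : ℕ, (gevreyWeight b k : ℝ) = Real.exp (b * k) - 1 := fun k =>
    Real.coe_toNNReal _ (sub_nonneg.2 (Real.one_le_exp (by positivity)))
  refine ⟨fun n m h => ?_, fun n m => le_of_eq ?_⟩
  · unfold gevreyWeight; gcongr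
  · apply NNReal.coe_injective
    push_cast [hW]
    rw [mul_add, Real.exp_add]
    ring

theorem weightedNorm_gevreyWeight_mul_le {θ : ℝ} (hθ₀ : 0 ≤ θ) (hθ₁ : θ ≤ 1) (b : ℝ)
    (a : ℕ → ℂ) :
    weightedNorm (gevreyWeight (θ * b)) a ≤ ENNReal.ofReal θ * weightedNorm (gevreyWeight b) a := by
  rw [weightedNorm, weightedNorm, ← ENNReal.tsum_mul_left]
  refine ENNReal.tsum_le_tsum fun k => ?_
  rw [← mul_assoc]
  gcongr
  have hconv := convexOn_exp.2 (mem_univ 0) (mem_univ (b * k)) (sub_nonneg.2 hθ₁) hθ₀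
    (sub_add_cancel 1 θ)
  simp only [smul_eq_mul, mul_zero, zero_add, Real.exp_zero, mul_one] at hconv
  rw [gevreyWeight, gevreyWeight, ENNReal.ofReal, ← ENNReal.coe_mul, ← Real.toNNReal_mul hθ₀,
    ENNReal.coe_le_coe]
  gcongr
  rw [mul_assoc]
  linarith

theorem tsum_ofReal_exp_mul_norm {b : ℝ} (hb : 0 ≤ b) (a : ℕ → ℂ) :
    ∑' k : ℕ, ENNReal.ofReal (Real.exp (b * k) * ‖a k‖) =
      wienerNorm a + weightedNorm (gevreyWeight b) a := by
  rw [wienerNorm, weightedNorm, ← ENNReal.tsum_add]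
  refine tsum_congr fun k => ?_
  rw [ENNReal.ofReal_mul (Real.exp_pos _).le, ofReal_norm, ← one_add_mul, gevreyWeight,
    ENNReal.ofReal, ← ENNReal.coe_one, ← ENNReal.coe_add, ← Real.toNNReal_one,
    ← Real.toNNReal_add zero_le_one (sub_nonneg.2 (Real.one_le_exp (by positivity))),
    add_sub_cancel]

theorem wienerNorm_eq_ofReal_tsum {a : ℕ → ℂ} (h : Summable fun k => ‖a k‖) :
    wienerNorm a = ENNReal.ofReal (∑' k, ‖a k‖) := by
  simp only [wienerNorm, ENNReal.ofReal_tsum_of_nonneg (fun _ => norm_nonneg _) h, ofReal_norm]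

theorem weightedNorm_gevreyWeight_le_ofReal_tsum {b : ℝ} (hb : 0 ≤ b) {a : ℕ → ℂ}
    (h : Summable fun k : ℕ => Real.exp (b * k) * ‖a k‖) :
    weightedNorm (gevreyWeight b) a ≤ ENNReal.ofReal (∑' k : ℕ, Real.exp (b * k) * ‖a k‖) := by
  rw [ENNReal.ofReal_tsum_of_nonneg (fun _ => by positivity) h, tsum_ofReal_exp_mul_norm hb]
  exact le_add_self

theorem summable_and_tsum_le_of_tsum_ofReal_le {f : ℕ → ℝ} (hf : ∀ k, 0 ≤ f k) {B : ℝ≥0}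
    (h : ∑' k, ENNReal.ofReal (f k) ≤ B) : Summable f ∧ ∑' k, f k ≤ B := by
  have hfin : ∑' k, ENNReal.ofReal (f k) ≠ ∞ := ne_top_of_le_ne_top ENNReal.coe_ne_top h
  have hf' : f = fun k => (ENNReal.ofReal (f k)).toReal :=
    funext fun k => (ENNReal.toReal_ofReal (hf k)).symm
  refine ⟨hf' ▸ ENNReal.summable_toReal hfin, ?_⟩
  rw [hf', ← ENNReal.tsum_toReal_eq fun _ => ENNReal.ofReal_ne_top]
  exact ENNReal.toReal_le_of_le_ofReal B.coe_nonneg (h.trans_eq ENNReal.ofReal_coe_nnreal.symm)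

theorem exists_norm_le_one_re_mul_eq_norm (z : ℂ) : ∃ ω : ℂ, ‖ω‖ ≤ 1 ∧ (ω * z).re = ‖z‖ := by
  refine ⟨(starRingEnd ℂ) z / ‖z‖, ?_, ?_⟩
  · rw [norm_div, Complex.norm_conj, Complex.norm_real, norm_norm]
    exact div_self_le_one _
  · rw [div_mul_eq_mul_div, Complex.conj_mul']
    norm_cast
    rcases eq_or_ne ‖z‖ 0 with h | h
    · simp [h]
    · field_simp

theorem sum_mul_norm_sub_le_of_hasDerivAt {ι : Type*} (F : Finset ι) {f f' : ι → ℝ → ℂ}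
    {w : ι → ℝ} (hw : ∀ i, 0 ≤ w i) {a t L : ℝ}
    (hf : ∀ i ∈ F, ∀ s ∈ uIcc a t, HasDerivAt (f i) (f' i s) s)
    (hL : ∀ s ∈ uIcc a t, ∑ i ∈ F, w i * ‖f' i s‖ ≤ L) :
    ∑ i ∈ F, w i * ‖f i t - f i a‖ ≤ L * |t - a| := by
  choose ω hω_norm hω using fun i => exists_norm_le_one_re_mul_eq_norm (f i t - f i a)
  set g : ℝ → ℝ := fun s => ∑ i ∈ F, w i * (ω i * f i s).re
  have hg : ∀ s ∈ uIcc a t, HasDerivAt g (∑ i ∈ F, w i * (ω i * f' i s).re) s := fun s hs =>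
    HasDerivAt.fun_sum fun i hi =>
      ((Complex.reCLM.hasFDerivAt.comp_hasDerivAt s ((hf i hi s hs).const_mul (ω i))).const_mul
        (w i))
  have hg' : ∀ s ∈ uIcc a t, ‖∑ i ∈ F, w i * (ω i * f' i s).re‖ ≤ L := fun s hs =>
    calc ‖∑ i ∈ F, w i * (ω i * f' i s).re‖ ≤ ∑ i ∈ F, w i * ‖f' i s‖ := by
          refine (norm_sum_le _ _).trans (Finset.sum_le_sum fun i _ => ?_)
          rw [norm_mul, Real.norm_of_nonneg (hw i)]
          refine mul_le_mul_of_nonneg_left ?_ (hw i)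
          calc ‖(ω i * f' i s).re‖ ≤ ‖ω i * f' i s‖ := Complex.abs_re_le_norm _
            _ ≤ ‖f' i s‖ := by
              rw [norm_mul]; exact mul_le_of_le_one_left (norm_nonneg _) (hω_norm i)
      _ ≤ L := hL s hs
  have hmvt := (convex_uIcc a t).norm_image_sub_le_of_norm_hasDerivWithin_le
    (fun s hs => (hg s hs).hasDerivWithinAt) hg' left_mem_uIcc right_mem_uIcc
  calc ∑ i ∈ F, w i * ‖f i t - f i a‖ = g t - g a := by
        simp only [g, ← Finset.sum_sub_distrib, ← mul_sub, ← Complex.sub_re, ← mul_sub, hω]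
    _ ≤ L * |t - a| := (le_abs_self _).trans hmvt

theorem ofReal_sum_mul_norm (F : Finset ℕ) (W : ℕ → ℝ≥0) (a : ℕ → ℂ) :
    ENNReal.ofReal (∑ k ∈ F, W k * ‖a k‖) = ∑ k ∈ F, (W k : ℝ≥0∞) * ‖a k‖ₑ := by
  rw [ENNReal.ofReal_sum_of_nonneg fun k _ => by positivity]
  refine Finset.sum_congr rfl fun k _ => ?_
  rw [ENNReal.ofReal_mul (W k).coe_nonneg, ofReal_norm, ENNReal.ofReal_coe_nnreal]

theorem weightedNorm_le_add_of_hasDerivAt {u u' : ℝ → ℕ → ℂ}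
    (hu : ∀ s k, HasDerivAt (fun s => u s k) (u' s k) s) (W : ℕ → ℝ≥0) {a t : ℝ} {L : ℝ≥0}
    (hL : ∀ s ∈ uIcc a t, weightedNorm W (u' s) ≤ L) :
    weightedNorm W (u t) ≤ weightedNorm W (u a) + L * ENNReal.ofReal |t - a| := by
  rw [weightedNorm, ENNReal.tsum_eq_iSup_sum]
  refine iSup_le fun F => ?_
  have hmvt : ∑ k ∈ F, W k * ‖u t k - u a k‖ ≤ L * |t - a| :=
    sum_mul_norm_sub_le_of_hasDerivAt F (w := fun k => W k) (fun k => (W k).coe_nonneg)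
      (fun k _ s _ => hu s k) fun s hs => by
        rw [← ENNReal.ofReal_le_ofReal_iff L.coe_nonneg, ofReal_sum_mul_norm,
          ENNReal.ofReal_coe_nnreal]
        exact (ENNReal.sum_le_tsum F).trans (hL s hs)
  calc ∑ k ∈ F, (W k : ℝ≥0∞) * ‖u t k‖ₑ
      ≤ ∑ k ∈ F, ((W k : ℝ≥0∞) * ‖u a k‖ₑ + W k * ‖u t k - u a k‖ₑ) :=
        Finset.sum_le_sum fun k _ => by
          rw [← mul_add]
          gcongr
          simpa using enorm_add_le (u a k) (u t k - u a k)
    _ ≤ weightedNorm W (u a) + ENNReal.ofReal (L * |t - a|) := by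
        rw [Finset.sum_add_distrib]
        exact add_le_add (ENNReal.sum_le_tsum F)
          ((ofReal_sum_mul_norm F W fun k => u t k - u a k).symm.trans_le
            (ENNReal.ofReal_le_ofReal hmvt))
    _ = weightedNorm W (u a) + L * ENNReal.ofReal |t - a| := by
        rw [ENNReal.ofReal_mul L.coe_nonneg, ENNReal.ofReal_coe_nnreal]

theorem exists_abs_sub_le_and_abs_sub_le {a s r η : ℝ} (hr : 0 ≤ r) (hη : 0 ≤ η)
    (h : |s - a| ≤ r + η) : ∃ a', |a' - a| ≤ r ∧ |s - a'| ≤ η := by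
  refine ⟨max (a - r) (min s (a + r)), ?_, ?_⟩ <;> rw [abs_le] at * <;>
    constructor <;> simp only [max_def, min_def] <;> split_ifs <;> linarith

section Evolution

variable {u u' : ℝ → ℕ → ℂ} {M : ℝ≥0}
  (hu : ∀ s k, HasDerivAt (fun s => u s k) (u' s k) s)
  (hdom : ∀ s k, ‖u' s k‖ₑ ≤ cubicMajorant (u s) k)
  (hM : ∀ s, wienerNorm (u s) ≤ M)

include hdom hM in
theorem weightedNorm_deriv_le {W : ℕ → ℝ≥0} (hW : IsGevreyWeight W) {s : ℝ} {B : ℝ≥0}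
    (hB : weightedNorm W (u s) ≤ B) :
    weightedNorm W (u' s) ≤ ((2 * B * M ^ 2 + B ^ 2 * M : ℝ≥0) : ℝ≥0∞) :=
  calc weightedNorm W (u' s) ≤ ∑' k, W k * cubicMajorant (u s) k :=
        ENNReal.tsum_le_tsum fun k => by gcongr; exact hdom s k
    _ ≤ 2 * weightedNorm W (u s) * wienerNorm (u s) ^ 2 +
          weightedNorm W (u s) ^ 2 * wienerNorm (u s) := tsum_mul_cubicMajorant_le hW _
    _ ≤ 2 * (B : ℝ≥0∞) * M ^ 2 + (B : ℝ≥0∞) ^ 2 * M := by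
        gcongr <;> first | exact hB | exact hM s
    _ = _ := by push_cast; rfl

include hu hdom hM in
theorem weightedNorm_le_add_of_forall_le {W : ℕ → ℝ≥0} (hW : IsGevreyWeight W) {a t : ℝ}
    {B : ℝ≥0} (hB : ∀ s ∈ uIcc a t, weightedNorm W (u s) ≤ B) :
    weightedNorm W (u t) ≤
      weightedNorm W (u a) + ((2 * B * M ^ 2 + B ^ 2 * M : ℝ≥0) : ℝ≥0∞) * ENNReal.ofReal |t - a| :=
  weightedNorm_le_add_of_hasDerivAt hu W fun s hs => weightedNorm_deriv_le hdom hM hW (hB s hs)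

include hu hdom hM in
theorem weightedNorm_le_two_mul_of_forall_le_three_mul {W : ℕ → ℝ≥0} (hW : IsGevreyWeight W)
    {C : ℝ≥0} (hC : 1 ≤ C) (hM₁ : 1 ≤ M) {a t : ℝ} (ha : weightedNorm W (u a) ≤ C)
    (ht : |t - a| ≤ ((15 * C * M ^ 2)⁻¹ : ℝ≥0))
    (h3C : ∀ s ∈ uIcc a t, weightedNorm W (u s) ≤ ↑(3 * C)) :
    weightedNorm W (u t) ≤ 2 * C := by
  have hrate : 2 * (3 * C) * M ^ 2 + (3 * C) ^ 2 * M ≤ 15 * C ^ 2 * M ^ 2 := by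
    rw [← NNReal.coe_le_coe]
    have hC' : (1 : ℝ) ≤ C := hC
    have hM' : (1 : ℝ) ≤ M := hM₁
    push_cast
    nlinarith [mul_le_mul hC' hM' zero_le_one (by positivity),
      mul_nonneg (sub_nonneg.2 hC') (sub_nonneg.2 hM')]
  have hrateδ : 15 * C ^ 2 * M ^ 2 * (15 * C * M ^ 2)⁻¹ = C := by
    have : C ≠ 0 := by positivity
    have : M ≠ 0 := by positivity
    field_simp
  calc weightedNorm W (u t)
      ≤ C + ((2 * (3 * C) * M ^ 2 + (3 * C) ^ 2 * M : ℝ≥0) : ℝ≥0∞) * ENNReal.ofReal |t - a| :=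
        (weightedNorm_le_add_of_forall_le hu hdom hM hW h3C).trans (by gcongr)
    _ ≤ C + ((15 * C ^ 2 * M ^ 2 * (15 * C * M ^ 2)⁻¹ : ℝ≥0) : ℝ≥0∞) := by
        rw [ENNReal.coe_mul]
        gcongr
        exact (ENNReal.ofReal_le_ofReal ht).trans_eq ENNReal.ofReal_coe_nnreal
    _ = 2 * C := by rw [hrateδ, two_mul]

include hu hdom hM in
/-- The bound `W ≤ R` makes the norm Lipschitz in time, with a constant `L` depending on `R`; this
carries the bound `3 C` across time steps of length `η`, on which the sharp rate then applies. -/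
theorem weightedNorm_le_two_mul_of_bounded {W : ℕ → ℝ≥0} (hW : IsGevreyWeight W) {R : ℝ≥0}
    (hWR : ∀ k, W k ≤ R) {C : ℝ≥0} (hC : 1 ≤ C) (hM₁ : 1 ≤ M) {a : ℝ}
    (ha : weightedNorm W (u a) ≤ C) {t : ℝ} (ht : |t - a| ≤ ((15 * C * M ^ 2)⁻¹ : ℝ≥0)) :
    weightedNorm W (u t) ≤ 2 * C := by
  set δ : ℝ≥0 := (15 * C * M ^ 2)⁻¹
  set L : ℝ≥0 := 2 * (R * M) * M ^ 2 + (R * M) ^ 2 * M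
  set η : ℝ≥0 := C / (L + 1)
  have hLη : L * η ≤ C := by
    rw [mul_div_left_comm]
    exact mul_le_of_le_one_right' (div_le_one_of_le₀ le_self_add (by positivity))
  have hcrude : ∀ a' s,
      weightedNorm W (u s) ≤ weightedNorm W (u a') + L * ENNReal.ofReal |s - a'| :=
    fun a' s => weightedNorm_le_add_of_forall_le hu hdom hM hW fun r _ =>
      (weightedNorm_le_mul_wienerNorm hWR _).trans <| by push_cast; gcongr; exact hM r
  have key : ∀ j : ℕ, ∀ s, |s - a| ≤ min (j * η : ℝ) δ → weightedNorm W (u s) ≤ 2 * C := by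
    intro j
    induction j with
    | zero =>
      intro s hs
      obtain rfl : s = a := by simpa [sub_eq_zero] using hs.trans (min_le_left _ _)
      exact ha.trans (le_mul_of_one_le_left' one_le_two)
    | succ j ih =>
      have h3C : ∀ s, |s - a| ≤ min ((j + 1 : ℕ) * η : ℝ) δ → weightedNorm W (u s) ≤ ↑(3 * C) := by
        intro s hs
        obtain ⟨a', ha', hs'⟩ := exists_abs_sub_le_and_abs_sub_le (r := min (j * η : ℝ) δ)
          (by positivity) η.coe_nonneg <| hs.trans <|
            (min_le_min (by push_cast; linarith) (le_add_of_nonneg_right η.coe_nonneg)).trans_eq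
              (min_add_add_right _ _ _)
        calc weightedNorm W (u s) ≤ weightedNorm W (u a') + L * ENNReal.ofReal |s - a'| :=
              hcrude a' s
          _ ≤ 2 * C + L * η := by
              gcongr
              · exact ih a' ha'
              · exact (ENNReal.ofReal_le_ofReal hs').trans_eq ENNReal.ofReal_coe_nnreal
          _ ≤ ↑(3 * C) := by exact_mod_cast (add_le_add le_rfl hLη).trans_eq (by ring)
      exact fun s hs => weightedNorm_le_two_mul_of_forall_le_three_mul hu hdom hM hW hC hM₁ ha
        (hs.trans (min_le_right _ _)) fun r hr => h3C r ((abs_sub_left_of_mem_uIcc hr).trans hs)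
  obtain ⟨j, hj⟩ := exists_nat_ge (δ / η : ℝ)
  refine key j t (ht.trans_eq (min_eq_right ?_).symm)
  rwa [← div_le_iff₀ (by positivity)]

include hu hdom hM in
theorem weightedNorm_le_two_mul {W : ℕ → ℝ≥0} (hW : IsGevreyWeight W) {C : ℝ≥0} (hC : 1 ≤ C)
    (hM₁ : 1 ≤ M) {a : ℝ} (ha : weightedNorm W (u a) ≤ C) {t : ℝ}
    (ht : |t - a| ≤ ((15 * C * M ^ 2)⁻¹ : ℝ≥0)) : weightedNorm W (u t) ≤ 2 * C :=
  weightedNorm_le_of_forall_min_le fun R =>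
    weightedNorm_le_two_mul_of_bounded hu hdom hM (hW.min R) (fun _ => min_le_right _ _) hC hM₁
      ((weightedNorm_mono (fun _ => min_le_left _ _) _).trans ha) ht

theorem ofReal_exp_neg_one_mul_two_mul_le (C : ℝ≥0∞) :
    ENNReal.ofReal (Real.exp (-1)) * (2 * C) ≤ C := by
  rw [← mul_assoc]
  refine mul_le_of_le_one_left' ?_
  rw [← ENNReal.ofReal_ofNat 2, ← ENNReal.ofReal_mul (Real.exp_pos _).le, ENNReal.ofReal_le_one,
    Real.exp_neg, inv_mul_le_iff₀ (Real.exp_pos _), mul_one]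
  linarith [Real.add_one_le_exp 1]

include hu hdom hM in
theorem weightedNorm_gevreyWeight_exp_neg_le {σ : ℝ} (hσ : 0 ≤ σ) {C : ℝ≥0} (hC : 1 ≤ C)
    (hM₁ : 1 ≤ M) (h₀ : weightedNorm (gevreyWeight σ) (u 0) ≤ C) (n : ℕ) {t : ℝ}
    (ht : |t| ≤ (n + 1) * ((15 * C * M ^ 2)⁻¹ : ℝ≥0)) :
    weightedNorm (gevreyWeight (σ * Real.exp (-n))) (u t) ≤ 2 * C := by
  set δ : ℝ≥0 := (15 * C * M ^ 2)⁻¹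
  induction n generalizing t with
  | zero =>
    simp only [CharP.cast_eq_zero, neg_zero, Real.exp_zero, mul_one, zero_add, one_mul] at ht ⊢
    exact weightedNorm_le_two_mul hu hdom hM (isGevreyWeight_gevreyWeight hσ) hC hM₁ h₀
      (by rwa [sub_zero])
  | succ n ih =>
    obtain ⟨a, ha, hta⟩ := exists_abs_sub_le_and_abs_sub_le (a := 0) (s := t) (r := (n + 1) * δ)
      (by positivity) δ.coe_nonneg (by push_cast at ht; rw [sub_zero]; linarith)
    have hσn : σ * Real.exp (-(n + 1 : ℕ)) = Real.exp (-1) * (σ * Real.exp (-n)) := by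
      push_cast
      rw [neg_add, Real.exp_add]
      ring
    have hshrink : weightedNorm (gevreyWeight (σ * Real.exp (-(n + 1 : ℕ)))) (u a) ≤ C :=
      calc _ ≤ ENNReal.ofReal (Real.exp (-1)) *
              weightedNorm (gevreyWeight (σ * Real.exp (-n))) (u a) := by
            rw [hσn]
            exact weightedNorm_gevreyWeight_mul_le (Real.exp_pos _).le
              (Real.exp_le_one_iff.2 (by norm_num)) _ _
        _ ≤ ENNReal.ofReal (Real.exp (-1)) * (2 * C) := by
            gcongr
            exact ih (by rwa [sub_zero] at ha)
        _ ≤ C := ofReal_exp_neg_one_mul_two_mul_le _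
    exact weightedNorm_le_two_mul hu hdom hM (isGevreyWeight_gevreyWeight (by positivity)) hC hM₁
      hshrink hta

include hu hdom hM in
theorem weightedNorm_gevreyWeight_le {σ : ℝ} (hσ : 0 ≤ σ) {C : ℝ≥0} (hC : 1 ≤ C)
    (hM₁ : 1 ≤ M) (h₀ : weightedNorm (gevreyWeight σ) (u 0) ≤ C) (t : ℝ) :
    weightedNorm (gevreyWeight (σ * Real.exp (-((15 * C * M ^ 2 : ℝ≥0) : ℝ) * |t|))) (u t)
      ≤ 2 * C := by
  set δ : ℝ≥0 := (15 * C * M ^ 2)⁻¹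
  have hδ : (0 : ℝ) < δ := by positivity
  set n := ⌊|t| / δ⌋₊
  refine (weightedNorm_mono (fun k => gevreyWeight_le_gevreyWeight ?_ k) _).trans
    (weightedNorm_gevreyWeight_exp_neg_le hu hdom hM hσ hC hM₁ h₀ n ?_)
  · gcongr
    have hn : (n : ℝ) ≤ |t| / δ := Nat.floor_le (by positivity)
    rw [NNReal.coe_inv, div_inv_eq_mul] at hn
    linarith
  · have := Nat.lt_floor_add_one (|t| / δ)
    rw [div_lt_iff₀ hδ] at this
    linarith

end Evolution

end Szego

open Szego

/-- If `u` is a Fourier-side solution of the cubic Szegő equation with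
uniformly bounded Wiener norm `‖u(t)‖_W ≤ M` and analytic initial datum,
`‖u(0)‖_{G_σ(W)} < ∞`, then there are `λ > 0` and `C₀ > 0` such that for all `t`,
`‖u(t)‖_{G_{τ(t)}(W)} ≤ C₀` where `τ(t) = σ e^{-λ|t|}`. -/
theorem szego_gevrey_persistence (σ : ℝ) (hσ : 0 < σ) (u : ℝ → ℕ → ℂ)
    (hu : IsSzegoSolution u) (M : ℝ)
    (hW : ∀ t : ℝ, Summable fun k : ℕ => ‖u t k‖)
    (hM : ∀ t : ℝ, (∑' k : ℕ, ‖u t k‖) ≤ M)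
    (hG : Summable fun k : ℕ => Real.exp (σ * k) * ‖u 0 k‖) :
    ∃ lam C₀ : ℝ, 0 < lam ∧ 0 < C₀ ∧ ∀ t : ℝ,
      (Summable fun k : ℕ => Real.exp (σ * Real.exp (-lam * |t|) * k) * ‖u t k‖) ∧
      (∑' k : ℕ, Real.exp (σ * Real.exp (-lam * |t|) * k) * ‖u t k‖) ≤ C₀ := by
  set M₁ : ℝ≥0 := M.toNNReal + 1
  set C : ℝ≥0 := (∑' k : ℕ, Real.exp (σ * k) * ‖u 0 k‖).toNNReal + 1
  have hdom : ∀ s k, ‖-Complex.I * szegoCubic u s k‖ₑ ≤ cubicMajorant (u s) k := fun s k => by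
    rw [enorm_mul, enorm_neg, ← ofReal_norm Complex.I, Complex.norm_I, ENNReal.ofReal_one, one_mul]
    exact enorm_szegoCubic_le u s k
  have hWiener : ∀ s, wienerNorm (u s) ≤ M₁ := fun s =>
    (wienerNorm_eq_ofReal_tsum (hW s)).trans_le <|
      (ENNReal.ofReal_le_ofReal (hM s)).trans (ENNReal.coe_le_coe.2 le_self_add)
  have h₀ : weightedNorm (gevreyWeight σ) (u 0) ≤ C :=
    (weightedNorm_gevreyWeight_le_ofReal_tsum hσ.le hG).trans (ENNReal.coe_le_coe.2 le_self_add)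
  have hC : 1 ≤ C := le_add_self
  have hM₁ : 1 ≤ M₁ := le_add_self
  refine ⟨(15 * C * M₁ ^ 2 : ℝ≥0), (M₁ + 2 * C : ℝ≥0), by positivity, by positivity, fun t => ?_⟩
  refine summable_and_tsum_le_of_tsum_ofReal_le (fun _ => by positivity) ?_
  rw [tsum_ofReal_exp_mul_norm (by positivity)]
  push_cast
  exact add_le_add (hWiener t) (weightedNorm_gevreyWeight_le (fun s k => (hu s k).2) hdom
    hWiener hσ.le hC hM₁ h₀ t)
end

section
/- Let τ ≥ 0 and let a : ℕ → ℝ be nonnegative with ∑_{k∈ℕ} (1+k)·e^{τk}·a(k) < ∞. Then ( ∑_{k} e^{τk}·a(k) )² · ( ∑_{k} a(k) ) ≤ 2e² · ( ∑_{k} a(k) )³ + 2τ · ( ∑_{k} k·e^{τk}·a(k) ) · ( ∑_{k} e^{τk}·a(k) ) · ( ∑_{k} a(k) ), where e is Euler's number. -/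
open scoped BigOperators

/-- Elementary inequality `e^x ≤ e + √x · e^x` for `x ≥ 0`. -/
lemma exp_le_e_add_sqrt_mul_exp {x : ℝ} (_hx : 0 ≤ x) :
    Real.exp x ≤ Real.exp 1 + Real.sqrt x * Real.exp x := by
  rcases le_or_gt x 1 with h | h
  · have h1 : Real.exp x ≤ Real.exp 1 := Real.exp_le_exp.2 h
    have h2 : 0 ≤ Real.sqrt x * Real.exp x :=
      mul_nonneg (Real.sqrt_nonneg x) (Real.exp_pos x).le
    linarith
  · have h1 : (1 : ℝ) ≤ Real.sqrt x := by
      rw [show (1 : ℝ) = Real.sqrt 1 by simp]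
      exact Real.sqrt_le_sqrt h.le
    have h2 : Real.exp x ≤ Real.sqrt x * Real.exp x := by
      nlinarith [Real.exp_pos x]
    have h3 : (0 : ℝ) < Real.exp 1 := Real.exp_pos 1
    linarith

/-- For `τ ≥ 0` and nonnegative `a : ℕ → ℝ` with
`∑_k (1+k) e^{τk} a(k) < ∞`,
`(∑_k e^{τk} a(k))² (∑_k a(k)) ≤ 2e² (∑_k a(k))³ + 2τ (∑_k k e^{τk} a(k)) (∑_k e^{τk} a(k)) (∑_k a(k))`. -/
theorem gevrey_nonlinear_splitting (τ : ℝ) (hτ : 0 ≤ τ) (a : ℕ → ℝ) (ha : ∀ k, 0 ≤ a k)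
    (hsum : Summable fun k : ℕ => (1 + (k : ℝ)) * Real.exp (τ * k) * a k) :
    (∑' k : ℕ, Real.exp (τ * k) * a k) ^ 2 * (∑' k : ℕ, a k) ≤
      2 * Real.exp 1 ^ 2 * (∑' k : ℕ, a k) ^ 3 +
        2 * τ * (∑' k : ℕ, (k : ℝ) * Real.exp (τ * k) * a k) *
          (∑' k : ℕ, Real.exp (τ * k) * a k) * (∑' k : ℕ, a k) := by
  have hτk : ∀ k : ℕ, 0 ≤ τ * k := fun k => mul_nonneg hτ (Nat.cast_nonneg k)
  have he1 : ∀ k : ℕ, (1 : ℝ) ≤ Real.exp (τ * k) := fun k => Real.one_le_exp (hτk k)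
  have hy : ∀ k : ℕ, 0 ≤ Real.exp (τ * k) * a k :=
    fun k => mul_nonneg (Real.exp_pos _).le (ha k)
  have hA : Summable a := by
    refine hsum.of_nonneg_of_le ha fun k => ?_
    nlinarith [he1 k, ha k, (Nat.cast_nonneg k : (0:ℝ) ≤ k), hy k]
  have hS : Summable fun k : ℕ => Real.exp (τ * k) * a k := by
    refine hsum.of_nonneg_of_le hy fun k => ?_
    nlinarith [hy k, (Nat.cast_nonneg k : (0:ℝ) ≤ k)]
  have hK : Summable fun k : ℕ => (k : ℝ) * Real.exp (τ * k) * a k := by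
    refine hsum.of_nonneg_of_le (fun k => mul_nonneg (mul_nonneg (Nat.cast_nonneg k) (Real.exp_pos _).le) (ha k)) fun k => ?_
    nlinarith [hy k]
  set A := ∑' k : ℕ, a k with hAdef
  set S := ∑' k : ℕ, Real.exp (τ * k) * a k with hSdef
  set K := ∑' k : ℕ, (k : ℝ) * Real.exp (τ * k) * a k with hKdef
  have hA0 : 0 ≤ A := tsum_nonneg ha
  have hS0 : 0 ≤ S := tsum_nonneg hy
  have hK0 : 0 ≤ K := tsum_nonneg fun k =>
    mul_nonneg (mul_nonneg (Nat.cast_nonneg k) (Real.exp_pos _).le) (ha k)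
  -- the "remainder" sequence
  set T : ℕ → ℝ := fun k => Real.sqrt (τ * k) * (Real.exp (τ * k) * a k) with hTdef
  have hT0 : ∀ k, 0 ≤ T k := fun k => mul_nonneg (Real.sqrt_nonneg _) (hy k)
  -- Cauchy–Schwarz on finite sums
  have hCS : ∀ s : Finset ℕ, ∑ k ∈ s, T k ≤ Real.sqrt (τ * K * S) := by
    intro s
    have h1 : (∑ k ∈ s, T k) ^ 2 ≤
        (∑ k ∈ s, τ * k * (Real.exp (τ * k) * a k)) * ∑ k ∈ s, Real.exp (τ * k) * a k := by
      refine Finset.sum_sq_le_sum_mul_sum_of_sq_eq_mul s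
        (fun k _ => mul_nonneg (hτk k) (hy k)) (fun k _ => hy k) (fun k _ => ?_)
      have h := Real.sq_sqrt (hτk k)
      simp only [hTdef]
      rw [mul_pow, h]; ring
    have h2 : ∑ k ∈ s, τ * k * (Real.exp (τ * k) * a k) ≤ τ * K := by
      have : ∑ k ∈ s, τ * ((k : ℝ) * Real.exp (τ * k) * a k) ≤ τ * K := by
        rw [← Finset.mul_sum]
        exact mul_le_mul_of_nonneg_left
          (Summable.sum_le_tsum s (fun k _ => mul_nonneg (mul_nonneg (Nat.cast_nonneg k) (Real.exp_pos _).le) (ha k)) hK) hτ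
      calc ∑ k ∈ s, τ * k * (Real.exp (τ * k) * a k)
          = ∑ k ∈ s, τ * ((k : ℝ) * Real.exp (τ * k) * a k) := by
            apply Finset.sum_congr rfl; intro k _; ring
        _ ≤ τ * K := this
    have h3 : ∑ k ∈ s, Real.exp (τ * k) * a k ≤ S := Summable.sum_le_tsum s (fun k _ => hy k) hS
    have h4 : (∑ k ∈ s, T k) ^ 2 ≤ τ * K * S := by
      calc (∑ k ∈ s, T k) ^ 2 ≤ (∑ k ∈ s, τ * k * (Real.exp (τ * k) * a k)) *
            ∑ k ∈ s, Real.exp (τ * k) * a k := h1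
        _ ≤ τ * K * S := by
            exact mul_le_mul h2 h3 (Finset.sum_nonneg fun k _ => hy k)
              (mul_nonneg hτ hK0)
    have h5 : 0 ≤ ∑ k ∈ s, T k := Finset.sum_nonneg fun k _ => hT0 k
    exact (Real.le_sqrt h5 (mul_nonneg (mul_nonneg hτ hK0) hS0)).2 h4
  have hTs : Summable T := summable_of_sum_le hT0 hCS
  have hTle : ∑' k, T k ≤ Real.sqrt (τ * K * S) := Summable.tsum_le_of_sum_le hTs hCS
  have hT0' : 0 ≤ ∑' k, T k := tsum_nonneg hT0
  -- the splitting S ≤ e·A + ∑' T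
  have hsplit : S ≤ Real.exp 1 * A + ∑' k, T k := by
    have hpt : ∀ k : ℕ, Real.exp (τ * k) * a k ≤ Real.exp 1 * a k + T k := by
      intro k
      have := exp_le_e_add_sqrt_mul_exp (hτk k)
      have := mul_le_mul_of_nonneg_right this (ha k)
      simp only [hTdef]
      nlinarith [ha k]
    calc S ≤ ∑' k, (Real.exp 1 * a k + T k) :=
          Summable.tsum_le_tsum hpt hS ((hA.mul_left _).add hTs)
      _ = Real.exp 1 * A + ∑' k, T k := by
          rw [Summable.tsum_add (hA.mul_left _) hTs, tsum_mul_left]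
  set r := Real.sqrt (τ * K * S) with hrdef
  have hr0 : 0 ≤ r := Real.sqrt_nonneg _
  have hr2 : r ^ 2 = τ * K * S := Real.sq_sqrt (mul_nonneg (mul_nonneg hτ hK0) hS0)
  have hS' : S ≤ Real.exp 1 * A + r := by linarith
  have h1 : S ^ 2 ≤ 2 * Real.exp 1 ^ 2 * A ^ 2 + 2 * (τ * K * S) := by
    nlinarith [sq_nonneg (Real.exp 1 * A - r), sq_nonneg (Real.exp 1 * A + r),
      mul_nonneg (mul_nonneg (Real.exp_pos 1).le hA0) hr0, hS0]
  nlinarith [mul_le_mul_of_nonneg_right h1 hA0]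
end

section
/- Let C₁ > 0, T > 0, and let z : [0,T] → ℝ be differentiable with z′(t) ≤ −2C₁·z(t)² + 2e·C₁²·z(t) + 2e²·C₁³ for all t ∈ [0,T], where e is Euler's number. Then z(t) ≤ max{ z(0), ((1+√5)/2)·e·C₁ } for all t ∈ [0,T]. -/
/-!
Above the positive root `φ e C₁` of `z² - e C₁ z - e² C₁²` the right-hand side of the inequality is
strictly negative, so `z` can never cross a level `M + ε` with `M = max (z 0) (φ e C₁)` and `ε > 0`:
at a first crossing its derivative would have to be nonnegative. Letting `ε → 0` gives the bound.
-/

open Set Real goldenRatio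

theorem image_le_of_deriv_right_neg_of_gt {f f' : ℝ → ℝ} {a b M : ℝ}
    (hf : ContinuousOn f (Icc a b)) (hf' : ∀ x ∈ Ico a b, HasDerivWithinAt f (f' x) (Ici x) x)
    (ha : f a ≤ M) (hneg : ∀ x ∈ Ico a b, M < f x → f' x < 0) :
    ∀ x ∈ Icc a b, f x ≤ M := by
  intro x hx
  refine le_of_forall_pos_le_add fun ε hε => ?_
  exact image_le_of_deriv_right_lt_deriv_boundary hf hf' (by linarith)
    (fun _ => hasDerivAt_const _ (M + ε)) (fun y hy hfy => hneg y hy (by linarith)) hx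

theorem mul_add_sq_lt_sq_of_goldenRatio_mul_lt {c y : ℝ} (hc : 0 < c) (hy : φ * c < y) :
    c * y + c ^ 2 < y ^ 2 := by
  have hroot : 0 < y - φ * c := sub_pos.2 hy
  have hconj : 0 < y - ψ * c := by
    linarith [mul_neg_of_neg_of_pos goldenConj_neg hc, mul_pos goldenRatio_pos hc]
  have hfactor : y ^ 2 - c * y - c ^ 2 = (y - φ * c) * (y - ψ * c) := by
    linear_combination (-c ^ 2) * goldenRatio_mul_goldenConj - c * y * goldenRatio_add_goldenConj
  linarith [mul_pos hroot hconj]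

theorem riccati_inequality_bound_general (C₁ T : ℝ) (hC₁ : 0 < C₁)
    (z z' : ℝ → ℝ)
    (hz : ∀ t ∈ Set.Icc (0 : ℝ) T, HasDerivAt z (z' t) t)
    (hineq : ∀ t ∈ Set.Icc (0 : ℝ) T,
      z' t ≤ -2 * C₁ * (z t) ^ 2 + 2 * Real.exp 1 * C₁ ^ 2 * z t
        + 2 * (Real.exp 1) ^ 2 * C₁ ^ 3) :
    ∀ t ∈ Set.Icc (0 : ℝ) T,
      z t ≤ max (z 0) ((1 + Real.sqrt 5) / 2 * Real.exp 1 * C₁) := by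
  have heC : 0 < exp 1 * C₁ := mul_pos (exp_pos 1) hC₁
  refine image_le_of_deriv_right_neg_of_gt
    (fun t ht => (hz t ht).continuousAt.continuousWithinAt)
    (fun t ht => (hz t (Ico_subset_Icc_self ht)).hasDerivWithinAt) (le_max_left _ _) ?_
  intro t ht hzt
  have habove : exp 1 * C₁ * z t + (exp 1 * C₁) ^ 2 < z t ^ 2 :=
    mul_add_sq_lt_sq_of_goldenRatio_mul_lt heC
      (by rw [← mul_assoc]; exact (le_max_right _ _).trans_lt hzt)
  linarith [hineq t (Ico_subset_Icc_self ht), mul_lt_mul_of_pos_left habove hC₁]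

/-- Riccati-type differential inequality: if `z` is differentiable on
`[0,T]` with `z' ≤ −2C₁z² + 2eC₁²z + 2e²C₁³` there, then
`z(t) ≤ max{z(0), ((1+√5)/2) e C₁}` on `[0,T]`. -/
theorem riccati_inequality_bound (C₁ T : ℝ) (hC₁ : 0 < C₁) (hT : 0 < T)
    (z z' : ℝ → ℝ)
    (hz : ∀ t ∈ Set.Icc (0 : ℝ) T, HasDerivAt z (z' t) t)
    (hineq : ∀ t ∈ Set.Icc (0 : ℝ) T,
      z' t ≤ -2 * C₁ * (z t) ^ 2 + 2 * Real.exp 1 * C₁ ^ 2 * z t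
        + 2 * (Real.exp 1) ^ 2 * C₁ ^ 3) :
    ∀ t ∈ Set.Icc (0 : ℝ) T,
      z t ≤ max (z 0) ((1 + Real.sqrt 5) / 2 * Real.exp 1 * C₁) :=
  riccati_inequality_bound_general C₁ T hC₁ z z' hz hineq
end

section
/- Let σ > 0, λ > 0, C₀ > 0, C₁ > 0, s > 0 and let u : ℝ → (ℕ → ℂ). Suppose that for all t ∈ ℝ, ∑_{k∈ℕ} |u(t,k)| ≤ C₁ and ∑_{k∈ℕ} e^{σ·e^{−λ|t|}·k}·|u(t,k)| ≤ C₀. Then for all t ∈ ℝ, ∑_{k∈ℕ} (k^{2s}+1)·|u(t,k)|² ≤ C₁·[ e^{−2s}·(2s/σ)^{2s}·C₀·e^{2λs|t|} + C₁ ]. In particular the H^s norm of u(t) grows at most exponentially in |t|. -/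
open scoped BigOperators

lemma rpow_le_exp_aux (p τ x : ℝ) (hp : 0 < p) (hτ : 0 < τ) (hx : 0 ≤ x) :
    x ^ p ≤ (p / τ) ^ p * Real.exp (-p) * Real.exp (τ * x) := by
  rcases eq_or_lt_of_le hx with h | h
  · rw [← h, Real.zero_rpow hp.ne']
    positivity
  · rw [Real.rpow_def_of_pos h, Real.rpow_def_of_pos (by positivity),
      ← Real.exp_add, ← Real.exp_add, Real.exp_le_exp]
    have h1 := Real.log_le_sub_one_of_pos (show 0 < τ * x / p by positivity)
    have h2 : Real.log (τ * x / p) = Real.log τ + Real.log x - Real.log p := by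
      rw [Real.log_div (by positivity) hp.ne', Real.log_mul hτ.ne' h.ne']
    rw [h2] at h1
    have h4 := mul_le_mul_of_nonneg_right h1 hp.le
    have h5 : (τ * x / p - 1) * p = τ * x - p := by field_simp
    rw [h5] at h4
    rw [Real.log_div hp.ne' hτ.ne']
    nlinarith [h4]

/-- The uniform Gevrey bound with shrinking radius `τ(t) = σ e^{−λ|t|}`
implies at most exponential growth of the `H^s` norm:
`∑_k (k^{2s}+1)|u(t,k)|² ≤ C₁ [e^{−2s}(2s/σ)^{2s} C₀ e^{2λs|t|} + C₁]`. -/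
theorem sobolev_growth_from_gevrey (σ lam C₀ C₁ s : ℝ) (hσ : 0 < σ) (hlam : 0 < lam)
    (hC₀ : 0 < C₀) (hC₁ : 0 < C₁) (hs : 0 < s) (u : ℝ → ℕ → ℂ)
    (hW : ∀ t : ℝ, Summable fun k : ℕ => ‖u t k‖)
    (hWb : ∀ t : ℝ, (∑' k : ℕ, ‖u t k‖) ≤ C₁)
    (hG : ∀ t : ℝ,
      Summable fun k : ℕ => Real.exp (σ * Real.exp (-lam * |t|) * k) * ‖u t k‖)
    (hGb : ∀ t : ℝ,
      (∑' k : ℕ, Real.exp (σ * Real.exp (-lam * |t|) * k) * ‖u t k‖) ≤ C₀) :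
    ∀ t : ℝ, ∑' k : ℕ, ((k : ℝ) ^ (2 * s) + 1) * ‖u t k‖ ^ 2 ≤
      C₁ * (Real.exp (-(2 * s)) * (2 * s / σ) ^ (2 * s) * C₀ *
          Real.exp (2 * lam * s * |t|) + C₁) := by
  intro t
  set τ : ℝ := σ * Real.exp (-lam * |t|) with hτdef
  have hτ : 0 < τ := by positivity
  set M : ℝ := Real.exp (-(2 * s)) * (2 * s / σ) ^ (2 * s) * Real.exp (2 * lam * s * |t|)
    with hMdef
  have hM : 0 < M := by positivity
  -- key: (2s/τ)^(2s) * exp(-(2s)) = M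
  have hMeq : (2 * s / τ) ^ (2 * s) * Real.exp (-(2 * s)) = M := by
    have h1 : 2 * s / τ = (2 * s / σ) * Real.exp (lam * |t|) := by
      rw [hτdef]
      rw [show -lam * |t| = -(lam * |t|) by ring, Real.exp_neg]
      field_simp
    rw [h1, Real.mul_rpow (by positivity) (Real.exp_pos _).le,
      Real.rpow_def_of_pos (Real.exp_pos _), Real.log_exp, hMdef]
    ring_nf
  -- pointwise bound
  have hub : ∀ k : ℕ, ‖u t k‖ ≤ C₁ := by
    intro k
    exact le_trans (Summable.le_tsum (hW t) k fun j _ => norm_nonneg _) (hWb t)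
  have hpt : ∀ k : ℕ, ((k : ℝ) ^ (2 * s) + 1) * ‖u t k‖ ^ 2 ≤
      C₁ * (M * (Real.exp (τ * k) * ‖u t k‖) + ‖u t k‖) := by
    intro k
    have hk : (k : ℝ) ^ (2 * s) ≤ M * Real.exp (τ * k) := by
      calc (k : ℝ) ^ (2 * s) ≤ (2 * s / τ) ^ (2 * s) * Real.exp (-(2 * s)) *
            Real.exp (τ * k) := rpow_le_exp_aux (2 * s) τ k (by positivity) hτ (Nat.cast_nonneg k)
        _ = M * Real.exp (τ * k) := by rw [hMeq]
    have hn : (0:ℝ) ≤ ‖u t k‖ := norm_nonneg _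
    have h6 := mul_le_mul_of_nonneg_right hk hn
    calc ((k : ℝ) ^ (2 * s) + 1) * ‖u t k‖ ^ 2
        = ((k : ℝ) ^ (2 * s) * ‖u t k‖ + ‖u t k‖) * ‖u t k‖ := by ring
      _ ≤ (M * Real.exp (τ * k) * ‖u t k‖ + ‖u t k‖) * ‖u t k‖ :=
          mul_le_mul_of_nonneg_right (by linarith) hn
      _ ≤ (M * Real.exp (τ * k) * ‖u t k‖ + ‖u t k‖) * C₁ :=
          mul_le_mul_of_nonneg_left (hub k) (by positivity)
      _ = C₁ * (M * (Real.exp (τ * k) * ‖u t k‖) + ‖u t k‖) := by ring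
  -- summability of RHS
  have hS : Summable fun k : ℕ => C₁ * (M * (Real.exp (τ * k) * ‖u t k‖) + ‖u t k‖) := by
    apply Summable.mul_left
    exact ((((hG t).mul_left M)).add (hW t))
  -- LHS summable
  have hL : Summable fun k : ℕ => ((k : ℝ) ^ (2 * s) + 1) * ‖u t k‖ ^ 2 :=
    Summable.of_nonneg_of_le (fun k => by positivity) hpt hS
  calc ∑' k : ℕ, ((k : ℝ) ^ (2 * s) + 1) * ‖u t k‖ ^ 2
      ≤ ∑' k : ℕ, C₁ * (M * (Real.exp (τ * k) * ‖u t k‖) + ‖u t k‖) :=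
        Summable.tsum_le_tsum hpt hL hS
    _ = C₁ * (M * (∑' k : ℕ, Real.exp (τ * k) * ‖u t k‖) + ∑' k : ℕ, ‖u t k‖) := by
        rw [tsum_mul_left, Summable.tsum_add ((hG t).mul_left M) (hW t), tsum_mul_left]
    _ ≤ C₁ * (M * C₀ + C₁) := by
        have := hGb t
        have := hWb t
        have h1 : M * (∑' k : ℕ, Real.exp (τ * k) * ‖u t k‖) ≤ M * C₀ :=
          mul_le_mul_of_nonneg_left (hGb t) hM.le
        nlinarith [hWb t]
    _ = C₁ * (Real.exp (-(2 * s)) * (2 * s / σ) ^ (2 * s) * C₀ *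
          Real.exp (2 * lam * s * |t|) + C₁) := by rw [hMdef]; ring
end

section
/- Let s > 1 be real and let a : ℕ → ℂ satisfy ∑_{n∈ℕ} (1+n)^{2s}|a(n)|² < ∞. Then ∑_{k∈ℕ} ( ∑_{ℓ∈ℕ} |a(k+ℓ)|² )^{1/2} ≤ ( s/(s−1) )^{1/2} · ( ∑_{n∈ℕ} (1+n)^{2s}·|a(n)|² )^{1/2}. -/
/-!
Put `c k = ∑' l, ‖a (k + l)‖ ^ 2` and `w k = (1 + k) ^ (2 * s - 1)`. Cauchy–Schwarz gives
`∑ k, √(c k) ≤ √(∑ k, (w k)⁻¹) * √(∑ k, w k * c k)`. The first sum is a `ζ(2s - 1)` partial sum,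
bounded by comparison with `∫ x ^ (1 - 2 * s)`. For the second, monotonicity of `w` gives
`w k * c k ≤ ∑' l, w (k + l) * ‖a (k + l)‖ ^ 2`, and summing these tails over `k` counts the
index `n` exactly `n + 1` times, which turns the weight `w n` into `(1 + n) ^ (2 * s)`.
-/

open Finset

lemma sum_range_one_add_rpow_neg_le {p : ℝ} (hp : 1 < p) (N : ℕ) :
    ∑ k ∈ range N, (1 + (k : ℝ)) ^ (-p) ≤ p / (p - 1) := by
  have hp1 : 0 < p - 1 := by linarith
  rcases N with _ | M
  · simp only [range_zero, sum_empty]; positivity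
  have hanti : AntitoneOn (fun x : ℝ => x ^ (-p)) (Set.Icc 1 (1 + M)) := fun x hx y _ hxy =>
    Real.rpow_le_rpow_of_nonpos (by linarith [hx.1]) hxy (by linarith)
  have hzero : (0 : ℝ) ∉ Set.uIcc 1 (1 + (M : ℝ)) := by
    rw [Set.uIcc_of_le (by simp)]; simp
  have hintegral :
      ∫ x in (1 : ℝ)..1 + M, x ^ (-p) = (1 - (1 + (M : ℝ)) ^ (-p + 1)) / (p - 1) := by
    rw [integral_rpow (Or.inr ⟨by linarith, hzero⟩), Real.one_rpow,
      div_eq_div_iff (by linarith) hp1.ne']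
    ring
  calc ∑ k ∈ range (M + 1), (1 + (k : ℝ)) ^ (-p)
      = ∑ i ∈ range M, (1 + ((i + 1 : ℕ) : ℝ)) ^ (-p) + 1 := by
        simp [sum_range_succ']
    _ ≤ (1 - (1 + (M : ℝ)) ^ (-p + 1)) / (p - 1) + 1 := by
        gcongr; exact hintegral ▸ hanti.sum_le_integral
    _ ≤ 1 / (p - 1) + 1 := by
        gcongr
        linarith [Real.rpow_nonneg (by positivity : (0 : ℝ) ≤ 1 + M) (-p + 1)]
    _ = p / (p - 1) := by field_simp; ring

lemma tsum_nat_add_eq_tsum_indicator {f : ℕ → ℝ} (k : ℕ) :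
    ∑' l, f (k + l) = ∑' n, (Set.Ici k).indicator f n := by
  calc ∑' l, f (k + l) = ∑' l, (Set.Ici k).indicator f (k + l) :=
        tsum_congr fun l => (Set.indicator_of_mem (Set.mem_Ici.2 (Nat.le_add_right k l)) f).symm
    _ = ∑' n, (Set.Ici k).indicator f n :=
        (add_right_injective k).tsum_eq fun n hn =>
          ⟨n - k, Nat.add_sub_cancel' (Set.support_indicator_subset hn)⟩

lemma sum_range_indicator_Ici_le {f : ℕ → ℝ} {n : ℕ} (hf : 0 ≤ f n) (N : ℕ) :
    ∑ k ∈ range N, (Set.Ici k).indicator f n ≤ (n + 1) * f n := by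
  calc ∑ k ∈ range N, (Set.Ici k).indicator f n
      = #{k ∈ range N | k ≤ n} * f n := by
        simp [Set.indicator_apply, sum_ite, ← nsmul_eq_mul]
    _ ≤ (n + 1) * f n := by
        have hcard : #{k ∈ range N | k ≤ n} ≤ #(range (n + 1)) :=
          card_le_card fun k hk => by simp only [mem_filter, mem_range] at hk ⊢; omega
        gcongr
        exact_mod_cast hcard.trans_eq (card_range (n + 1))

lemma sum_range_tsum_nat_add_le {f : ℕ → ℝ} (hf : 0 ≤ f)
    (hsum : Summable fun n => (n + 1) * f n) (N : ℕ) :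
    ∑ k ∈ range N, ∑' l, f (k + l) ≤ ∑' n, (n + 1) * f n := by
  have hf_sum : Summable f :=
    hsum.of_nonneg_of_le hf fun n => le_mul_of_one_le_left (hf n) (by simp)
  simp_rw [tsum_nat_add_eq_tsum_indicator]
  rw [← Summable.tsum_finsetSum fun k _ => hf_sum.indicator _]
  exact Summable.tsum_le_tsum (fun n => sum_range_indicator_Ici_le (hf n) N)
    (summable_sum fun k _ => hf_sum.indicator _) hsum

lemma mul_tsum_nat_add_le_tsum_nat_add_mul {f w : ℕ → ℝ} {k : ℕ} (hf : 0 ≤ f) (hw : Monotone w)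
    (hwk : 0 ≤ w k) (hsum : Summable fun l => w (k + l) * f (k + l)) :
    w k * ∑' l, f (k + l) ≤ ∑' l, w (k + l) * f (k + l) := by
  have hle : ∀ l, w k * f (k + l) ≤ w (k + l) * f (k + l) := fun l =>
    mul_le_mul_of_nonneg_right (hw (Nat.le_add_right k l)) (hf _)
  rw [← tsum_mul_left]
  exact Summable.tsum_le_tsum hle (hsum.of_nonneg_of_le (fun l => mul_nonneg hwk (hf _)) hle) hsum

lemma sum_range_mul_tsum_nat_add_le {f w : ℕ → ℝ} (hf : 0 ≤ f) (hw : Monotone w) (hw₀ : 0 ≤ w)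
    (hsum : Summable fun n => (n + 1) * (w n * f n)) (N : ℕ) :
    ∑ k ∈ range N, w k * ∑' l, f (k + l) ≤ ∑' n, (n + 1) * (w n * f n) := by
  have hwf : Summable fun n => w n * f n :=
    hsum.of_nonneg_of_le (fun n => mul_nonneg (hw₀ n) (hf n)) fun n =>
      le_mul_of_one_le_left (mul_nonneg (hw₀ n) (hf n)) (by simp)
  calc ∑ k ∈ range N, w k * ∑' l, f (k + l)
      ≤ ∑ k ∈ range N, ∑' l, w (k + l) * f (k + l) :=
        sum_le_sum fun k _ => mul_tsum_nat_add_le_tsum_nat_add_mul hf hw (hw₀ k)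
          (hwf.comp_injective (add_right_injective k))
    _ ≤ ∑' n, (n + 1) * (w n * f n) :=
        sum_range_tsum_nat_add_le (fun n => mul_nonneg (hw₀ n) (hf n)) hsum N

lemma Finset.sum_sqrt_le_sqrt_sum_inv_mul_sqrt_sum_mul {ι : Type*} (t : Finset ι) {w c : ι → ℝ}
    (hw : ∀ i, 0 < w i) (hc : ∀ i, 0 ≤ c i) :
    ∑ i ∈ t, √(c i) ≤ √(∑ i ∈ t, (w i)⁻¹) * √(∑ i ∈ t, w i * c i) :=
  calc ∑ i ∈ t, √(c i) = ∑ i ∈ t, √((w i)⁻¹) * √(w i * c i) :=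
        sum_congr rfl fun i _ => by
          rw [← Real.sqrt_mul (inv_nonneg.2 (hw i).le), inv_mul_cancel_left₀ (hw i).ne']
    _ ≤ √(∑ i ∈ t, (w i)⁻¹) * √(∑ i ∈ t, w i * c i) :=
        Real.sum_sqrt_mul_sqrt_le t (fun i => inv_nonneg.2 (hw i).le)
          fun i => mul_nonneg (hw i).le (hc i)

/-- For real `s > 1` and `a : ℕ → ℂ` with `∑_n (1+n)^{2s}|a(n)|² < ∞`,
`∑_k (∑_ℓ |a(k+ℓ)|²)^{1/2} ≤ (s/(s−1))^{1/2} (∑_n (1+n)^{2s}|a(n)|²)^{1/2}`. -/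
theorem hankel_trace_sobolev_bound (s : ℝ) (hs : 1 < s) (a : ℕ → ℂ)
    (hsum : Summable fun n : ℕ => (1 + (n : ℝ)) ^ (2 * s) * ‖a n‖ ^ 2) :
    ∑' k : ℕ, Real.sqrt (∑' l : ℕ, ‖a (k + l)‖ ^ 2) ≤
      Real.sqrt (s / (s - 1)) *
        Real.sqrt (∑' n : ℕ, (1 + (n : ℝ)) ^ (2 * s) * ‖a n‖ ^ 2) := by
  set w : ℕ → ℝ := fun n => (1 + n) ^ (2 * s - 1) with hw
  set f : ℕ → ℝ := fun n => ‖a n‖ ^ 2 with hf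
  have hw_pos (n : ℕ) : 0 < w n := by positivity
  have hweight (n : ℕ) : ((n : ℝ) + 1) * (w n * f n) = (1 + n) ^ (2 * s) * ‖a n‖ ^ 2 := by
    rw [← mul_assoc, add_comm (n : ℝ), mul_comm _ (w n), hw, hf,
      ← Real.rpow_add_one (by positivity)]
    ring_nf
  have hzeta (N : ℕ) : ∑ k ∈ range N, (w k)⁻¹ ≤ s / (s - 1) := by
    simp only [hw, ← Real.rpow_neg (by positivity : (0 : ℝ) ≤ 1 + (_ : ℕ))]
    refine (sum_range_one_add_rpow_neg_le (by linarith) N).trans ?_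
    rw [div_le_div_iff₀ (by linarith) (by linarith)]
    nlinarith
  have htails (N : ℕ) : ∑ k ∈ range N, w k * ∑' l, f (k + l) ≤
      ∑' n : ℕ, (1 + (n : ℝ)) ^ (2 * s) * ‖a n‖ ^ 2 := by
    rw [← tsum_congr hweight]
    exact sum_range_mul_tsum_nat_add_le (fun n => by positivity)
      (fun m n hmn => Real.rpow_le_rpow (by positivity) (by gcongr) (by linarith))
      (fun n => (hw_pos n).le) (hsum.congr fun n => (hweight n).symm) N
  refine Real.tsum_le_of_sum_range_le (fun k => Real.sqrt_nonneg _) fun N => ?_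
  calc ∑ k ∈ range N, √(∑' l, f (k + l))
      ≤ √(∑ k ∈ range N, (w k)⁻¹) * √(∑ k ∈ range N, w k * ∑' l, f (k + l)) :=
        (range N).sum_sqrt_le_sqrt_sum_inv_mul_sqrt_sum_mul hw_pos
          fun k => tsum_nonneg fun l => by positivity
    _ ≤ _ := by gcongr <;> [exact hzeta N; exact htails N]
end
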